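/- arXiv:1805.03570 — 2 statements merged into one kernel-verified Lean document; each statement's English description precedes it below -/
import Mathlib

section
/- Assume 1/(2q1) + 1/(2q2) + 1/(2q3) < 1 < Q. Fix x1, x2, x3 > 0 and define f0(u1,u2,u3) := ∫_0^{x1} ∫_0^{x2} ∫_0^{x3} (c1·|t1−u1|^{q1/ν} + c2·|t2−u2|^{q2/ν} + c3·|t3−u3|^{q3/ν})^{−ν} dt1 dt2 dt3. Then ∫_{ℝ³} f0(u)² du < ∞, i.e. the well-balanced Gaussian random field 𝒴₀ of the paper is well defined. -/
/-!
Weighted AM–GM with weights `θᵢ = 1 / (qᵢ Q)` gives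
`(Σ cᵢ |tᵢ - uᵢ| ^ (qᵢ / ν)) ^ (-ν) ≤ Π Cᵢ |tᵢ - uᵢ| ^ (-p)` with `p = 1 / Q`, so `f₀` is dominated by
a product `Π Cᵢ Gᵢ(uᵢ)` of one-dimensional potentials `G(v) = ∫₀ˣ |t - v| ^ (-p) dt`, and
`∫ f₀² ≤ Π Cᵢ² ∫ Gᵢ²`. The hypotheses say exactly that `1 / 2 < p < 1`: since `p < 1` the
singularity is integrable and `G` is bounded, and since `2 p > 1` the decay
`G(v) ≲ |v| ^ (-p)` at infinity is square integrable.
-/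

open MeasureTheory Set
open scoped ENNReal

lemma ENNReal.rpow_neg_le_rpow_neg {a b : ℝ≥0∞} (hab : a ≤ b) {p : ℝ} (hp : 0 ≤ p) :
    b ^ (-p) ≤ a ^ (-p) := by
  rw [ENNReal.rpow_neg, ENNReal.rpow_neg]
  exact ENNReal.inv_le_inv.mpr (ENNReal.rpow_le_rpow hab hp)

lemma ENNReal.rpow_neg_add_add_le {θ₁ θ₂ θ₃ ν : ℝ} (h₁ : 0 ≤ θ₁) (h₂ : 0 ≤ θ₂) (h₃ : 0 ≤ θ₃)
    (hθ : θ₁ + θ₂ + θ₃ = 1) (hν : 0 ≤ ν) {a b c : ℝ≥0∞} (ha : a ≠ ⊤) (hb : b ≠ ⊤) (hc : c ≠ ⊤) :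
    (a + b + c) ^ (-ν) ≤ a ^ (-(θ₁ * ν)) * b ^ (-(θ₂ * ν)) * c ^ (-(θ₃ * ν)) := by
  lift a to NNReal using ha
  lift b to NNReal using hb
  lift c to NNReal using hc
  lift θ₁ to NNReal using h₁
  lift θ₂ to NNReal using h₂
  lift θ₃ to NNReal using h₃
  have hθ' : θ₁ + θ₂ + θ₃ = 1 := by exact_mod_cast hθ
  have hgm : a ^ (θ₁ : ℝ) * b ^ (θ₂ : ℝ) * c ^ (θ₃ : ℝ) ≤ a + b + c :=
    calc _ ≤ θ₁ * a + θ₂ * b + θ₃ * c := NNReal.geom_mean_le_arith_mean3_weighted _ _ _ _ _ _ hθ'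
      _ ≤ 1 * a + 1 * b + 1 * c := by
        gcongr <;> rw [← hθ'] <;> simp only [le_add_iff_nonneg_left, le_add_iff_nonneg_right,
          le_add_left, zero_le, add_assoc]
      _ = a + b + c := by simp only [one_mul]
  have hgm' := ENNReal.coe_le_coe.mpr hgm
  push_cast [ENNReal.coe_rpow_of_nonneg _ (NNReal.coe_nonneg _)] at hgm'
  calc ((a : ℝ≥0∞) + b + c) ^ (-ν)
      ≤ ((a : ℝ≥0∞) ^ (θ₁ : ℝ) * (b : ℝ≥0∞) ^ (θ₂ : ℝ) * (c : ℝ≥0∞) ^ (θ₃ : ℝ)) ^ (-ν) :=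
        ENNReal.rpow_neg_le_rpow_neg hgm' hν
    _ = _ := by
      rw [ENNReal.mul_rpow_of_ne_top (by finiteness) (by finiteness),
        ENNReal.mul_rpow_of_ne_top (by finiteness) (by finiteness)]
      simp only [neg_mul_eq_mul_neg _ ν, ENNReal.rpow_mul]

lemma ENNReal.ofReal_rpow_le_rpow_ofReal {x : ℝ} (hx : 0 ≤ x) (y : ℝ) :
    ENNReal.ofReal (x ^ y) ≤ ENNReal.ofReal x ^ y := by
  rcases hx.lt_or_eq with hx | rfl
  · rw [ENNReal.ofReal_rpow_of_pos hx]
  rcases lt_trichotomy y 0 with hy | rfl | hy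
  · simp [Real.zero_rpow hy.ne, ENNReal.zero_rpow_of_neg hy]
  · simp
  · simp [Real.zero_rpow hy.ne', ENNReal.zero_rpow_of_pos hy]

lemma ENNReal.ofReal_mul_rpow_div_rpow {c a q ν : ℝ} (hc : 0 ≤ c) (ha : 0 ≤ a) (hq : 0 ≤ q)
    (hν : 0 < ν) (θ : ℝ) :
    ENNReal.ofReal (c * a ^ (q / ν)) ^ (-(θ * ν)) =
      ENNReal.ofReal c ^ (-(θ * ν)) * ENNReal.ofReal a ^ (-(θ * q)) := by
  rw [ENNReal.ofReal_mul hc, ← ENNReal.ofReal_rpow_of_nonneg ha (by positivity),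
    ENNReal.mul_rpow_of_ne_top ENNReal.ofReal_ne_top (by finiteness), ← ENNReal.rpow_mul]
  congr 2
  field_simp

lemma exists_rpow_neg_sum_le_mul {q₁ q₂ q₃ c₁ c₂ c₃ ν : ℝ}
    (hq₁ : 0 < q₁) (hq₂ : 0 < q₂) (hq₃ : 0 < q₃) (hc₁ : 0 < c₁) (hc₂ : 0 < c₂) (hc₃ : 0 < c₃)
    (hν : 0 < ν) (hlow : 1 / (2 * q₁) + 1 / (2 * q₂) + 1 / (2 * q₃) < 1)
    (hup : 1 < 1 / q₁ + 1 / q₂ + 1 / q₃) :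
    ∃ p : ℝ, 1 / 2 < p ∧ p < 1 ∧ ∃ C₁ C₂ C₃ : ℝ≥0∞, C₁ ≠ ⊤ ∧ C₂ ≠ ⊤ ∧ C₃ ≠ ⊤ ∧
      ∀ a₁ a₂ a₃ : ℝ, 0 ≤ a₁ → 0 ≤ a₂ → 0 ≤ a₃ →
        ENNReal.ofReal ((c₁ * a₁ ^ (q₁ / ν) + c₂ * a₂ ^ (q₂ / ν) + c₃ * a₃ ^ (q₃ / ν)) ^ (-ν)) ≤
          C₁ * ENNReal.ofReal a₁ ^ (-p) * (C₂ * ENNReal.ofReal a₂ ^ (-p)) *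
            (C₃ * ENNReal.ofReal a₃ ^ (-p)) := by
  set Q := 1 / q₁ + 1 / q₂ + 1 / q₃
  have hQ : 0 < Q := by positivity
  have hQ₂ : Q < 2 := by
    simp only [one_div, mul_inv, Q] at hlow ⊢
    linarith
  -- The weights `θᵢ = 1 / (qᵢ Q)` sum to one and turn every `aᵢ ^ (qᵢ / ν)` into `aᵢ ^ (1 / Q)`.
  refine ⟨1 / Q, by rw [one_div_lt_one_div (by norm_num) hQ]; exact hQ₂,
    by rw [div_lt_one hQ]; exact hup, ENNReal.ofReal c₁ ^ (-(1 / (q₁ * Q) * ν)),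
    ENNReal.ofReal c₂ ^ (-(1 / (q₂ * Q) * ν)), ENNReal.ofReal c₃ ^ (-(1 / (q₃ * Q) * ν)),
    by simp [hc₁], by simp [hc₂], by simp [hc₃],
    fun a₁ a₂ a₃ ha₁ ha₂ ha₃ => ?_⟩
  have hθ : 1 / (q₁ * Q) + 1 / (q₂ * Q) + 1 / (q₃ * Q) = 1 := by
    field_simp
    simp only [Q]
    field_simp
  have hθq : ∀ q, 0 < q → 1 / (q * Q) * q = 1 / Q := fun q hq => by field_simp
  calc ENNReal.ofReal ((c₁ * a₁ ^ (q₁ / ν) + c₂ * a₂ ^ (q₂ / ν) + c₃ * a₃ ^ (q₃ / ν)) ^ (-ν))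
      ≤ (ENNReal.ofReal (c₁ * a₁ ^ (q₁ / ν)) + ENNReal.ofReal (c₂ * a₂ ^ (q₂ / ν)) +
          ENNReal.ofReal (c₃ * a₃ ^ (q₃ / ν))) ^ (-ν) := by
        rw [← ENNReal.ofReal_add (by positivity) (by positivity),
          ← ENNReal.ofReal_add (by positivity) (by positivity)]
        exact ENNReal.ofReal_rpow_le_rpow_ofReal (by positivity) _
    _ ≤ _ := ENNReal.rpow_neg_add_add_le (by positivity) (by positivity) (by positivity) hθ
        hν.le ENNReal.ofReal_ne_top ENNReal.ofReal_ne_top ENNReal.ofReal_ne_top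
    _ = _ := by
        rw [ENNReal.ofReal_mul_rpow_div_rpow hc₁.le ha₁ hq₁.le hν,
          ENNReal.ofReal_mul_rpow_div_rpow hc₂.le ha₂ hq₂.le hν,
          ENNReal.ofReal_mul_rpow_div_rpow hc₃.le ha₃ hq₃.le hν, hθq q₁ hq₁, hθq q₂ hq₂, hθq q₃ hq₃]

lemma lintegral_lintegral_lintegral_mul {α β γ : Type*} [MeasurableSpace α] [MeasurableSpace β]
    [MeasurableSpace γ] {μ : Measure α} {ν : Measure β} {ρ : Measure γ}
    {f : α → ℝ≥0∞} {g : β → ℝ≥0∞} {h : γ → ℝ≥0∞}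
    (hf : Measurable f) (hg : Measurable g) (hh : Measurable h) :
    ∫⁻ x, ∫⁻ y, ∫⁻ z, f x * g y * h z ∂ρ ∂ν ∂μ =
      (∫⁻ x, f x ∂μ) * (∫⁻ y, g y ∂ν) * ∫⁻ z, h z ∂ρ := by
  simp only [lintegral_const_mul _ hh, lintegral_mul_const _ (hg.const_mul _),
    lintegral_const_mul _ hg, lintegral_mul_const _ (hf.mul_const _), lintegral_mul_const _ hf]

lemma lintegral_prod_prod_mul {α β γ : Type*} [MeasurableSpace α] [MeasurableSpace β]
    [MeasurableSpace γ] {μ : Measure α} {ν : Measure β} {ρ : Measure γ} [SFinite ν] [SFinite ρ]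
    {f : α → ℝ≥0∞} {g : β → ℝ≥0∞} {h : γ → ℝ≥0∞}
    (hf : Measurable f) (hg : Measurable g) (hh : Measurable h) :
    ∫⁻ u, f u.1 * g u.2.1 * h u.2.2 ∂μ.prod (ν.prod ρ) =
      (∫⁻ x, f x ∂μ) * (∫⁻ y, g y ∂ν) * ∫⁻ z, h z ∂ρ := by
  simp only [mul_assoc]
  rw [lintegral_prod_mul (g := fun w : β × γ => g w.1 * h w.2) hf.aemeasurable (by fun_prop),
    lintegral_prod_mul hg.aemeasurable hh.aemeasurable]

lemma lintegral_Icc_abs_rpow_neg_lt_top {p : ℝ} (hp : p < 1) (a b : ℝ) :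
    ∫⁻ s in Icc a b, ENNReal.ofReal |s| ^ (-p) < ⊤ := by
  have hloc : LocallyIntegrable (fun s : ℝ => |s| ^ (-p)) :=
    locallyIntegrable_of_norm_le_rpow (C := 1) (α := p) (by simp) (by simpa using hp)
      (ae_of_all _ fun s => by simp [Real.abs_rpow_of_nonneg (abs_nonneg s)])
      (measurable_id.abs.pow_const _).aestronglyMeasurable
  have hae : ∀ᵐ s ∂volume.restrict (Icc a b),
      ENNReal.ofReal |s| ^ (-p) = ENNReal.ofReal (|s| ^ (-p)) := by
    filter_upwards [ae_restrict_of_ae (Measure.ae_ne volume 0)] with s hs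
    exact ENNReal.ofReal_rpow_of_pos (abs_pos.mpr hs)
  rw [lintegral_congr_ae hae]
  exact (hloc.integrableOn_isCompact isCompact_Icc).lintegral_lt_top

noncomputable def intervalPotential (p x v : ℝ) : ℝ≥0∞ :=
  ∫⁻ t in Ioc 0 x, ENNReal.ofReal |t - v| ^ (-p)

@[fun_prop]
lemma measurable_intervalPotential (p x : ℝ) : Measurable (intervalPotential p x) :=
  Measurable.lintegral_prod_right' (f := fun z : ℝ × ℝ => ENNReal.ofReal |z.2 - z.1| ^ (-p))
    (by fun_prop)

lemma intervalPotential_le_lintegral_Icc (p x v : ℝ) :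
    intervalPotential p x v ≤ ∫⁻ s in Icc (-v) (x - v), ENNReal.ofReal |s| ^ (-p) := by
  rw [← (measurePreserving_sub_right volume v).setLIntegral_comp_preimage_emb
    (measurableEmbedding_subRight v), preimage_sub_const_Icc, neg_add_cancel, sub_add_cancel]
  exact lintegral_mono_set Ioc_subset_Icc_self

lemma intervalPotential_le_of_le_abs_sub {p x v d : ℝ} (hp : 0 ≤ p)
    (hd : ∀ t ∈ Ioc 0 x, d ≤ |t - v|) :
    intervalPotential p x v ≤ ENNReal.ofReal x * ENNReal.ofReal d ^ (-p) := by
  calc intervalPotential p x v ≤ ∫⁻ _ in Ioc 0 x, ENNReal.ofReal d ^ (-p) :=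
        setLIntegral_mono' measurableSet_Ioc fun t ht =>
          ENNReal.rpow_neg_le_rpow_neg (ENNReal.ofReal_le_ofReal (hd t ht)) hp
    _ = _ := by rw [setLIntegral_const, Real.volume_Ioc, sub_zero, mul_comm]

lemma lintegral_intervalPotential_sq_lt_top {p : ℝ} (hp₁ : 1 / 2 < p) (hp₂ : p < 1) (x : ℝ) :
    ∫⁻ v, intervalPotential p x v ^ 2 < ⊤ := by
  set R := 2 * x + 1
  set M := ∫⁻ s in Icc (-R) (x + R), ENNReal.ofReal |s| ^ (-p)
  have hM : M < ⊤ := lintegral_Icc_abs_rpow_neg_lt_top hp₂ _ _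
  have hnear : ∀ v, |v| ≤ R → intervalPotential p x v ≤ M := fun v hv =>
    (intervalPotential_le_lintegral_Icc p x v).trans <| lintegral_mono_set <|
      Icc_subset_Icc (by linarith [le_abs_self v]) (by linarith [neg_abs_le v])
  have hfar : ∀ v, R < |v| → intervalPotential p x v ^ 2 ≤
      ENNReal.ofReal x ^ 2 * ENNReal.ofReal ((1 + |v|) / 2) ^ (-(2 * p)) := by
    intro v hv
    have hd : ∀ t ∈ Ioc 0 x, (1 + |v|) / 2 ≤ |t - v| := by
      rintro t ⟨ht₀, htx⟩
      have := abs_sub_abs_le_abs_sub v t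
      rw [abs_sub_comm, abs_of_pos ht₀] at this
      linarith
    calc intervalPotential p x v ^ 2
        ≤ (ENNReal.ofReal x * ENNReal.ofReal ((1 + |v|) / 2) ^ (-p)) ^ 2 := by
          gcongr; exact intervalPotential_le_of_le_abs_sub (by linarith) hd
      _ = _ := by
        rw [mul_pow, ← ENNReal.rpow_mul_natCast]
        congr 2
        push_cast
        ring
  have htail : ∫⁻ v, ENNReal.ofReal ((1 + |v|) / 2) ^ (-(2 * p)) < ⊤ := by
    have hint : Integrable (fun v : ℝ => (1 + ‖v‖) ^ (-(2 * p)) / 2 ^ (-(2 * p))) :=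
      (integrable_one_add_norm (by simp; linarith)).div_const _
    refine lt_of_eq_of_lt (lintegral_congr fun v => ?_) hint.lintegral_lt_top
    rw [ENNReal.ofReal_rpow_of_pos (by positivity), Real.div_rpow (by positivity) (by norm_num),
      Real.norm_eq_abs]
  calc ∫⁻ v, intervalPotential p x v ^ 2
      ≤ ∫⁻ v, ((Icc (-R) R).indicator (fun _ => M ^ 2) v +
          ENNReal.ofReal x ^ 2 * ENNReal.ofReal ((1 + |v|) / 2) ^ (-(2 * p))) := by
        refine lintegral_mono fun v => ?_
        by_cases hv : |v| ≤ R
        · rw [indicator_of_mem (mem_Icc.mpr (abs_le.mp hv))]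
          exact le_add_right (by gcongr; exact hnear v hv)
        · exact le_add_left (hfar v (not_le.mp hv))
    _ = M ^ 2 * volume (Icc (-R) R) +
          ENNReal.ofReal x ^ 2 * ∫⁻ v, ENNReal.ofReal ((1 + |v|) / 2) ^ (-(2 * p)) := by
        rw [lintegral_add_left (measurable_const.indicator measurableSet_Icc),
          lintegral_indicator_const measurableSet_Icc, lintegral_const_mul _ (by fun_prop)]
    _ < ⊤ := by
        rw [Real.volume_Icc]
        exact ENNReal.add_lt_top.mpr ⟨by finiteness, ENNReal.mul_lt_top (by finiteness) htail⟩

theorem stmt_17_general (q1 q2 q3 c1 c2 c3 ν x1 x2 x3 : ℝ)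
    (hq1 : 0 < q1) (hq2 : 0 < q2) (hq3 : 0 < q3)
    (hc1 : 0 < c1) (hc2 : 0 < c2) (hc3 : 0 < c3) (hν : 0 < ν)
    (hlow : 1 / (2 * q1) + 1 / (2 * q2) + 1 / (2 * q3) < 1)
    (hup : 1 < 1 / q1 + 1 / q2 + 1 / q3) :
    (∫⁻ u : ℝ × ℝ × ℝ,
      (∫⁻ t1 in Set.Ioc (0 : ℝ) x1, ∫⁻ t2 in Set.Ioc (0 : ℝ) x2, ∫⁻ t3 in Set.Ioc (0 : ℝ) x3,
        ENNReal.ofReal ((c1 * |t1 - u.1| ^ (q1 / ν) + c2 * |t2 - u.2.1| ^ (q2 / ν) +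
          c3 * |t3 - u.2.2| ^ (q3 / ν)) ^ (-ν))) ^ 2) < ⊤ := by
  obtain ⟨p, hp₁, hp₂, C₁, C₂, C₃, hC₁, hC₂, hC₃, hsep⟩ :=
    exists_rpow_neg_sum_le_mul hq1 hq2 hq3 hc1 hc2 hc3 hν hlow hup
  let F (C : ℝ≥0∞) (x v : ℝ) : ℝ≥0∞ := (C * intervalPotential p x v) ^ 2
  have hF : ∀ C x, Measurable (F C x) := fun C x => by fun_prop
  have hfin : ∀ C, C ≠ ⊤ → ∀ x, ∫⁻ v, F C x v < ⊤ := fun C hC x => by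
    simp only [F, mul_pow]
    rw [lintegral_const_mul _ (by fun_prop)]
    exact ENNReal.mul_lt_top (by finiteness) (lintegral_intervalPotential_sq_lt_top hp₁ hp₂ x)
  calc _ ≤ ∫⁻ u : ℝ × ℝ × ℝ, F C₁ x1 u.1 * F C₂ x2 u.2.1 * F C₃ x3 u.2.2 :=
        lintegral_mono fun u => by
          simp only [F, ← mul_pow]
          gcongr
          refine (lintegral_mono fun t1 => lintegral_mono fun t2 => lintegral_mono fun t3 =>
            hsep _ _ _ (abs_nonneg _) (abs_nonneg _) (abs_nonneg _)).trans_eq ?_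
          rw [lintegral_lintegral_lintegral_mul (by fun_prop) (by fun_prop) (by fun_prop),
            lintegral_const_mul' _ _ hC₁, lintegral_const_mul' _ _ hC₂,
            lintegral_const_mul' _ _ hC₃]
          rfl
    _ = _ := lintegral_prod_prod_mul (hF _ _) (hF _ _) (hF _ _)
    _ < ⊤ := ENNReal.mul_lt_top (ENNReal.mul_lt_top (hfin C₁ hC₁ x1) (hfin C₂ hC₂ x2))
        (hfin C₃ hC₃ x3)

theorem stmt_17 (q1 q2 q3 c1 c2 c3 ν x1 x2 x3 : ℝ)
    (hq1 : 0 < q1) (hq2 : 0 < q2) (hq3 : 0 < q3)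
    (hc1 : 0 < c1) (hc2 : 0 < c2) (hc3 : 0 < c3) (hν : 0 < ν)
    (hx1 : 0 < x1) (hx2 : 0 < x2) (hx3 : 0 < x3)
    (hlow : 1 / (2 * q1) + 1 / (2 * q2) + 1 / (2 * q3) < 1)
    (hup : 1 < 1 / q1 + 1 / q2 + 1 / q3) :
    (∫⁻ u : ℝ × ℝ × ℝ,
      (∫⁻ t1 in Set.Ioc (0 : ℝ) x1, ∫⁻ t2 in Set.Ioc (0 : ℝ) x2, ∫⁻ t3 in Set.Ioc (0 : ℝ) x3,
        ENNReal.ofReal ((c1 * |t1 - u.1| ^ (q1 / ν) + c2 * |t2 - u.2.1| ^ (q2 / ν) +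
          c3 * |t3 - u.2.2| ^ (q3 / ν)) ^ (-ν))) ^ 2) < ⊤ :=
  stmt_17_general q1 q2 q3 c1 c2 c3 ν x1 x2 x3 hq1 hq2 hq3 hc1 hc2 hc3 hν hlow hup
end

section
/- Assume 1/(2q1) + 1/q2 + 1/q3 < 1 < Q, and for t ∈ ℝ define θ(t) := ∫_{ℝ^5} [ (c1·|u|^{q1/ν} + c2·|s2|^{q2/ν} + c3·|s3|^{q3/ν})^ν · (c1·|t−u|^{q1/ν} + c2·|w2|^{q2/ν} + c3·|w3|^{q3/ν})^ν ]^{−1} du ds2 ds3 dw2 dw3. Then θ(t) is finite for every t ≠ 0 and satisfies the scaling identity θ(t) = θ(1)·|t|^{1 + 2q1(1/q2 + 1/q3 − 1)} for all t ≠ 0. (This identity implies that the field 𝒴₁ has the covariance structure of a fractional Brownian sheet B_{ℋ₁,1/2,1/2} with ℋ₁ = 3/2 − q1(1 − 1/q2 − 1/q3).) -/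
/-!
The integrand of `theta t` factors into a function of `(u, s₂, s₃)` times the same function of
`(t - u, w₂, w₃)`, so `theta t` is the autoconvolution at `t` of `G = thetaMarginal`,
`G x = ∫∫ ((c₁|x|^{q₁/ν} + c₂|y|^{q₂/ν} + c₃|z|^{q₃/ν})^ν)⁻¹ dy dz`.
The substitution `y = |x|^{q₁/q₂} y'`, `z = |x|^{q₁/q₃} z'` gives `G x = |x|^β G 1` with
`β = q₁/q₂ + q₁/q₃ - q₁`, and `G 1 < ∞` because `1/q₂ + 1/q₃ < 1`: a weighted AM-GM inequality
splits the decay between `y` and `z`. Hence `theta t = (G 1)² ∫ |u|^β |t - u|^β du`, and the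
substitution `u = t u'` produces the factor `|t|^{1 + 2β}`. The last integral is finite since
`-1 < β` (local singularities at `0` and `t`, from `Q > 1`) and `2β < -1` (decay at infinity,
from `1/(2q₁) + 1/q₂ + 1/q₃ < 1`).
-/

open MeasureTheory

noncomputable def theta (q1 q2 q3 c1 c2 c3 ν t : ℝ) : ENNReal :=
  ∫⁻ u : ℝ, ∫⁻ s2 : ℝ, ∫⁻ s3 : ℝ, ∫⁻ w2 : ℝ, ∫⁻ w3 : ℝ,
    ENNReal.ofReal
      (((c1 * |u| ^ (q1 / ν) + c2 * |s2| ^ (q2 / ν) + c3 * |s3| ^ (q3 / ν)) ^ ν *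
        (c1 * |t - u| ^ (q1 / ν) + c2 * |w2| ^ (q2 / ν) + c3 * |w3| ^ (q3 / ν)) ^ ν)⁻¹)

open Real Set
open scoped ENNReal

lemma lintegral_eq_abs_mul_lintegral_comp_mul_left (f : ℝ → ℝ≥0∞) {a : ℝ} (ha : a ≠ 0) :
    ∫⁻ x, f x = ENNReal.ofReal |a| * ∫⁻ x, f (a * x) := by
  rw [← (measurableEmbedding_mulLeft₀ ha).lintegral_map, Real.map_volume_mul_left ha,
    lintegral_smul_measure, smul_eq_mul, ← mul_assoc, ← ENNReal.ofReal_mul (abs_nonneg a),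
    abs_inv, mul_inv_cancel₀ (abs_ne_zero.2 ha), ENNReal.ofReal_one, one_mul]

lemma locallyIntegrable_abs_rpow {b : ℝ} (hb : -1 < b) :
    LocallyIntegrable fun x : ℝ => |x| ^ b := by
  refine locallyIntegrable_of_norm_le_rpow (by simp) (C := 1) (α := -b) (by simp; linarith)
    (ae_of_all _ fun x => ?_) (by fun_prop : Measurable _).aestronglyMeasurable
  simp [abs_rpow_of_nonneg (abs_nonneg x)]

lemma integrable_inv_one_add_abs_rpow_rpow {p r : ℝ} (hp : 0 < p) (hr : 0 < r) (h : 1 < p * r) :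
    Integrable fun s : ℝ => ((1 + |s| ^ p) ^ r)⁻¹ := by
  have hdom : Integrable fun s : ℝ => 2 ^ (p * r) * (1 + ‖s‖) ^ (-(p * r)) :=
    (integrable_one_add_norm (by simpa using h)).const_mul _
  refine hdom.mono' (by fun_prop : Measurable _).aestronglyMeasurable (ae_of_all _ fun s => ?_)
  have hs := abs_nonneg s
  have hbase : ((1 + |s|) / 2) ^ p ≤ 1 + |s| ^ p := by
    rcases le_total |s| 1 with h1 | h1
    · have : ((1 + |s|) / 2) ^ p ≤ 1 := rpow_le_one (by positivity) (by linarith) hp.le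
      linarith [rpow_nonneg hs p]
    · have : ((1 + |s|) / 2) ^ p ≤ |s| ^ p := rpow_le_rpow (by positivity) (by linarith) hp.le
      linarith
  have hle : ((1 + |s|) / 2) ^ (p * r) ≤ (1 + |s| ^ p) ^ r := by
    rw [rpow_mul (by positivity)]
    exact rpow_le_rpow (by positivity) hbase hr.le
  rw [Real.norm_eq_abs, abs_inv, abs_of_nonneg (by positivity), Real.norm_eq_abs,
    rpow_neg (by positivity), ← div_eq_mul_inv, ← inv_div, ← div_rpow (by positivity) zero_le_two]
  exact inv_anti₀ (by positivity) hle

lemma integrable_abs_rpow_mul_one_add_abs_rpow {b : ℝ} (hb₁ : -1 < b) (hb₂ : 2 * b < -1) :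
    Integrable fun u : ℝ => |u| ^ b * (1 + |u|) ^ b := by
  have hnear : Integrable ((Icc (-1) 1).indicator fun u : ℝ => |u| ^ b) :=
    ((locallyIntegrable_abs_rpow hb₁).integrableOn_isCompact isCompact_Icc).integrable_indicator
      measurableSet_Icc
  have hfar : Integrable fun u : ℝ => 2 ^ (-b) * (1 + ‖u‖) ^ (-(-(2 * b))) :=
    (integrable_one_add_norm (by simp; linarith)).const_mul _
  refine (hnear.add hfar).mono' (by fun_prop : Measurable _).aestronglyMeasurable
    (ae_of_all _ fun u => ?_)
  have hu := abs_nonneg u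
  simp only [neg_neg, Pi.add_apply, Real.norm_eq_abs]
  rw [abs_of_nonneg (by positivity)]
  rcases le_or_gt |u| 1 with h1 | h1
  · have : (1 + |u|) ^ b ≤ 1 := rpow_le_one_of_one_le_of_nonpos (by linarith) (by linarith)
    rw [indicator_of_mem (mem_Icc.2 (abs_le.1 h1))]
    nlinarith [rpow_nonneg hu b, rpow_nonneg (by positivity : 0 ≤ 1 + |u|) (2 * b),
      rpow_nonneg (zero_le_two : (0:ℝ) ≤ 2) (-b)]
  · have hu' : |u| ^ b ≤ 2 ^ (-b) * (1 + |u|) ^ b := by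
      rw [rpow_neg zero_le_two, ← div_eq_inv_mul, le_div_iff₀' (by positivity),
        ← mul_rpow zero_le_two hu]
      exact rpow_le_rpow_of_nonpos (by positivity) (by linarith) (by linarith)
    rw [indicator_of_notMem fun h => by linarith [abs_le.2 (mem_Icc.1 h)], zero_add, two_mul,
      rpow_add (by positivity), ← mul_assoc]
    exact mul_le_mul_of_nonneg_right hu' (by positivity)

lemma abs_rpow_mul_abs_one_sub_rpow_le {b : ℝ} (hb : b ≤ 0) (u : ℝ) :
    |u| ^ b * |1 - u| ^ b ≤
      3 ^ (-b) * (|u| ^ b * (1 + |u|) ^ b + |1 - u| ^ b * (1 + |1 - u|) ^ b) := by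
  -- `|v| + |w| ≥ 1` forces `|w| ≥ max (1/2) |v| ≥ (1 + |v|) / 3`
  have key : ∀ v w : ℝ, v + w = 1 → |v| ≤ |w| → |w| ^ b ≤ 3 ^ (-b) * (1 + |v|) ^ b := by
    intro v w hvw hle
    have : 1 ≤ |v| + |w| := by simpa [hvw] using abs_add_le v w
    rw [rpow_neg zero_le_three, ← div_eq_inv_mul, ← div_rpow (by positivity) zero_le_three]
    exact rpow_le_rpow_of_nonpos (by positivity) (by linarith) hb
  have h₁ := rpow_nonneg (abs_nonneg u) b
  have h₂ := rpow_nonneg (abs_nonneg (1 - u)) b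
  have h₃ := mul_nonneg h₁ (rpow_nonneg (by positivity : 0 ≤ 1 + |u|) b)
  have h₄ := mul_nonneg h₂ (rpow_nonneg (by positivity : 0 ≤ 1 + |1 - u|) b)
  have h₅ := rpow_nonneg (zero_le_three : (0:ℝ) ≤ 3) (-b)
  rcases le_total |u| |1 - u| with h | h
  · have := mul_le_mul_of_nonneg_left (key u (1 - u) (by ring) h) h₁
    nlinarith
  · have := mul_le_mul_of_nonneg_left (key (1 - u) u (by ring) h) h₂
    nlinarith

lemma lintegral_abs_rpow_mul_abs_one_sub_rpow_lt_top {b : ℝ} (hb₁ : -1 < b) (hb₂ : 2 * b < -1) :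
    ∫⁻ u : ℝ, ENNReal.ofReal (|u| ^ b * |1 - u| ^ b) < ⊤ := by
  have hk := integrable_abs_rpow_mul_one_add_abs_rpow hb₁ hb₂
  have hdom := (hk.add (hk.comp_sub_left 1)).const_mul (3 ^ (-b))
  refine (hdom.mono' (by fun_prop : Measurable _).aestronglyMeasurable
    (ae_of_all _ fun u => ?_)).lintegral_lt_top
  rw [Real.norm_eq_abs, abs_of_nonneg (by positivity)]
  exact abs_rpow_mul_abs_one_sub_rpow_le (by linarith) u

lemma lintegral_abs_rpow_mul_abs_sub_rpow {t : ℝ} (ht : t ≠ 0) (b : ℝ) :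
    ∫⁻ u : ℝ, ENNReal.ofReal (|u| ^ b * |t - u| ^ b) =
      ENNReal.ofReal (|t| ^ (1 + 2 * b)) * ∫⁻ u : ℝ, ENNReal.ofReal (|u| ^ b * |1 - u| ^ b) := by
  have ht' : 0 < |t| := abs_pos.2 ht
  have hpt : ∀ u : ℝ, ENNReal.ofReal (|t * u| ^ b * |t - t * u| ^ b) =
      ENNReal.ofReal (|t| ^ (2 * b)) * ENNReal.ofReal (|u| ^ b * |1 - u| ^ b) := by
    intro u
    rw [← ENNReal.ofReal_mul (by positivity), show t - t * u = t * (1 - u) by ring, abs_mul,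
      abs_mul, mul_rpow ht'.le (abs_nonneg _), mul_rpow ht'.le (abs_nonneg _), two_mul,
      rpow_add ht']
    ring_nf
  rw [lintegral_eq_abs_mul_lintegral_comp_mul_left _ ht]
  simp_rw [hpt]
  rw [lintegral_const_mul' _ _ ENNReal.ofReal_ne_top, ← mul_assoc, ← ENNReal.ofReal_mul ht'.le,
    rpow_add ht', Real.rpow_one]

lemma lintegral_lintegral_lintegral_lintegral_mul {α β γ δ : Type*} [MeasurableSpace α]
    [MeasurableSpace β] [MeasurableSpace γ] [MeasurableSpace δ] {μ : Measure α} {ν : Measure β}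
    [SFinite ν] {μ' : Measure γ} {ν' : Measure δ} {f : α → β → ℝ≥0∞} {g : γ → δ → ℝ≥0∞}
    (hf : Measurable (Function.uncurry f)) (hf_ne_top : ∀ x y, f x y ≠ ∞) :
    ∫⁻ x, ∫⁻ y, ∫⁻ x', ∫⁻ y', f x y * g x' y' ∂ν' ∂μ' ∂ν ∂μ =
      (∫⁻ x, ∫⁻ y, f x y ∂ν ∂μ) * ∫⁻ x', ∫⁻ y', g x' y' ∂ν' ∂μ' := by
  have hinner : ∀ x y, ∫⁻ x', ∫⁻ y', f x y * g x' y' ∂ν' ∂μ' =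
      f x y * ∫⁻ x', ∫⁻ y', g x' y' ∂ν' ∂μ' := fun x y => by
    simp_rw [lintegral_const_mul' _ _ (hf_ne_top x y)]
  simp_rw [hinner]
  have hmeas : Measurable fun x => ∫⁻ y, f x y ∂ν := hf.lintegral_prod_right'
  rw [← lintegral_mul_const _ hmeas]
  exact lintegral_congr fun x => lintegral_mul_const _ hf.of_uncurry_left

lemma one_add_rpow_mul_one_add_rpow_le {x y θ : ℝ} (hx : 0 ≤ x) (hy : 0 ≤ y) (hθ₀ : 0 ≤ θ)
    (hθ₁ : θ ≤ 1) : (1 + x) ^ θ * (1 + y) ^ (1 - θ) ≤ 1 + x + y :=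
  calc (1 + x) ^ θ * (1 + y) ^ (1 - θ) ≤ θ * (1 + x) + (1 - θ) * (1 + y) :=
        geom_mean_le_arith_mean2_weighted hθ₀ (by linarith) (by linarith) (by linarith) (by ring)
    _ ≤ 1 + x + y := by nlinarith

noncomputable section

def thetaGauge (q1 q2 q3 c1 c2 c3 ν x y z : ℝ) : ℝ :=
  c1 * |x| ^ (q1 / ν) + c2 * |y| ^ (q2 / ν) + c3 * |z| ^ (q3 / ν)

def thetaMarginal (q1 q2 q3 c1 c2 c3 ν x : ℝ) : ℝ≥0∞ :=
  ∫⁻ y : ℝ, ∫⁻ z : ℝ, ENNReal.ofReal ((thetaGauge q1 q2 q3 c1 c2 c3 ν x y z ^ ν)⁻¹)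

end

section
variable {q1 q2 q3 c1 c2 c3 ν : ℝ}

lemma thetaGauge_nonneg (hc1 : 0 ≤ c1) (hc2 : 0 ≤ c2) (hc3 : 0 ≤ c3) (x y z : ℝ) :
    0 ≤ thetaGauge q1 q2 q3 c1 c2 c3 ν x y z := by
  unfold thetaGauge; positivity

lemma thetaGauge_scale (hq2 : q2 ≠ 0) (hq3 : q3 ≠ 0) (hν : ν ≠ 0) {l : ℝ} (hl : 0 ≤ l)
    (x y z : ℝ) :
    thetaGauge q1 q2 q3 c1 c2 c3 ν (l * x) (l ^ (q1 / q2) * y) (l ^ (q1 / q3) * z) =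
      l ^ (q1 / ν) * thetaGauge q1 q2 q3 c1 c2 c3 ν x y z := by
  have hpow : ∀ {q : ℝ}, q ≠ 0 → ∀ w : ℝ,
      |l ^ (q1 / q) * w| ^ (q / ν) = l ^ (q1 / ν) * |w| ^ (q / ν) := by
    intro q hq w
    rw [abs_mul, abs_of_nonneg (rpow_nonneg hl _), mul_rpow (rpow_nonneg hl _) (abs_nonneg _),
      ← rpow_mul hl]
    congr 2
    field_simp
  rw [thetaGauge, thetaGauge, hpow hq2, hpow hq3, abs_mul, abs_of_nonneg hl,
    mul_rpow hl (abs_nonneg _)]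
  ring

lemma theta_eq_lintegral_thetaMarginal_mul (hc1 : 0 ≤ c1) (hc2 : 0 ≤ c2) (hc3 : 0 ≤ c3) (t : ℝ) :
    theta q1 q2 q3 c1 c2 c3 ν t =
      ∫⁻ u, thetaMarginal q1 q2 q3 c1 c2 c3 ν u * thetaMarginal q1 q2 q3 c1 c2 c3 ν (t - u) := by
  refine lintegral_congr fun u => ?_
  have hsplit : ∀ s2 s3 w2 w3 : ℝ,
      ENNReal.ofReal ((thetaGauge q1 q2 q3 c1 c2 c3 ν u s2 s3 ^ ν *
        thetaGauge q1 q2 q3 c1 c2 c3 ν (t - u) w2 w3 ^ ν)⁻¹) =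
      ENNReal.ofReal ((thetaGauge q1 q2 q3 c1 c2 c3 ν u s2 s3 ^ ν)⁻¹) *
        ENNReal.ofReal ((thetaGauge q1 q2 q3 c1 c2 c3 ν (t - u) w2 w3 ^ ν)⁻¹) := by
    intro s2 s3 w2 w3
    rw [mul_inv, ENNReal.ofReal_mul
      (inv_nonneg.2 (rpow_nonneg (thetaGauge_nonneg hc1 hc2 hc3 _ _ _) _))]
  simp_rw [thetaGauge] at hsplit
  simp_rw [hsplit]
  exact lintegral_lintegral_lintegral_lintegral_mul (by fun_prop)
    fun _ _ => ENNReal.ofReal_ne_top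

lemma thetaMarginal_eq_rpow_mul (hq2 : q2 ≠ 0) (hq3 : q3 ≠ 0) (hν : ν ≠ 0) (hc1 : 0 ≤ c1)
    (hc2 : 0 ≤ c2) (hc3 : 0 ≤ c3) {u : ℝ} (hu : u ≠ 0) :
    thetaMarginal q1 q2 q3 c1 c2 c3 ν u =
      ENNReal.ofReal (|u| ^ (q1 / q2 + q1 / q3 - q1)) * thetaMarginal q1 q2 q3 c1 c2 c3 ν 1 := by
  set l := |u| with hl_def
  have hl : 0 < l := abs_pos.2 hu
  -- substitute `y = l ^ (q1 / q2) * y'` and `z = l ^ (q1 / q3) * z'`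
  have hpt : ∀ y z : ℝ, ENNReal.ofReal
      ((thetaGauge q1 q2 q3 c1 c2 c3 ν u (l ^ (q1 / q2) * y) (l ^ (q1 / q3) * z) ^ ν)⁻¹) =
      ENNReal.ofReal ((l ^ q1)⁻¹) *
        ENNReal.ofReal ((thetaGauge q1 q2 q3 c1 c2 c3 ν 1 y z ^ ν)⁻¹) := by
    intro y z
    rw [show thetaGauge q1 q2 q3 c1 c2 c3 ν u = thetaGauge q1 q2 q3 c1 c2 c3 ν (l * 1) by
        funext y z; simp [thetaGauge, hl_def], thetaGauge_scale hq2 hq3 hν hl.le,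
      mul_rpow (rpow_nonneg hl.le _) (thetaGauge_nonneg hc1 hc2 hc3 _ _ _), ← rpow_mul hl.le,
      div_mul_cancel₀ _ hν, mul_inv, ENNReal.ofReal_mul (by positivity)]
  rw [thetaMarginal, lintegral_eq_abs_mul_lintegral_comp_mul_left _
    (rpow_pos_of_pos hl (q1 / q2)).ne']
  simp_rw [fun y => lintegral_eq_abs_mul_lintegral_comp_mul_left
    (fun z => ENNReal.ofReal ((thetaGauge q1 q2 q3 c1 c2 c3 ν u (l ^ (q1 / q2) * y) z ^ ν)⁻¹))
    (rpow_pos_of_pos hl (q1 / q3)).ne', hpt, lintegral_const_mul' _ _ ENNReal.ofReal_ne_top]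
  rw [← thetaMarginal, ← mul_assoc, ← mul_assoc, ← ENNReal.ofReal_mul (abs_nonneg _),
    ← ENNReal.ofReal_mul (by positivity), abs_of_pos (rpow_pos_of_pos hl _),
    abs_of_pos (rpow_pos_of_pos hl _), ← rpow_neg hl.le, ← rpow_add hl, ← rpow_add hl,
    sub_eq_add_neg]

lemma thetaMarginal_one_lt_top (hq2 : 0 < q2) (hq3 : 0 < q3) (hc1 : 0 < c1) (hc2 : 0 < c2)
    (hc3 : 0 < c3) (hν : 0 < ν) (h23 : 1 / q2 + 1 / q3 < 1) :
    thetaMarginal q1 q2 q3 c1 c2 c3 ν 1 < ⊤ := by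
  -- share the decay between `y` and `z` so that each of the two factors is integrable
  obtain ⟨θ, hθq2, hθq3⟩ := exists_between (show 1 / q2 < 1 - 1 / q3 by linarith)
  have hθy : 1 < θ * q2 := (div_lt_iff₀ hq2).1 hθq2
  have hθz : 1 < (1 - θ) * q3 := (div_lt_iff₀ hq3).1 (by linarith)
  have hθ₀ : 0 < θ := pos_of_mul_pos_left (one_pos.trans hθy) hq2.le
  have hθ₁ : 0 < 1 - θ := pos_of_mul_pos_left (one_pos.trans hθz) hq3.le
  have hy := integrable_inv_one_add_abs_rpow_rpow (div_pos hq2 hν) (mul_pos hθ₀ hν)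
    (show 1 < q2 / ν * (θ * ν) by field_simp; linarith)
  have hz := integrable_inv_one_add_abs_rpow_rpow (div_pos hq3 hν) (mul_pos hθ₁ hν)
    (show 1 < q3 / ν * ((1 - θ) * ν) by field_simp; linarith)
  set m := min c1 (min c2 c3)
  have hm : 0 < m := lt_min hc1 (lt_min hc2 hc3)
  have hbound : ∀ y z : ℝ, ENNReal.ofReal ((thetaGauge q1 q2 q3 c1 c2 c3 ν 1 y z ^ ν)⁻¹) ≤
      ENNReal.ofReal ((m ^ ν)⁻¹) * (ENNReal.ofReal (((1 + |y| ^ (q2 / ν)) ^ (θ * ν))⁻¹) *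
        ENNReal.ofReal (((1 + |z| ^ (q3 / ν)) ^ ((1 - θ) * ν))⁻¹)) := by
    intro y z
    set Y := |y| ^ (q2 / ν)
    set Z := |z| ^ (q3 / ν)
    have hY : 0 ≤ Y := rpow_nonneg (abs_nonneg _) _
    have hZ : 0 ≤ Z := rpow_nonneg (abs_nonneg _) _
    have hle : m * ((1 + Y) ^ θ * (1 + Z) ^ (1 - θ)) ≤ thetaGauge q1 q2 q3 c1 c2 c3 ν 1 y z := by
      have hm1 : m ≤ c1 := min_le_left _ _
      have hm2 : m ≤ c2 := (min_le_right _ _).trans (min_le_left _ _)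
      have hm3 : m ≤ c3 := (min_le_right _ _).trans (min_le_right _ _)
      have := mul_le_mul_of_nonneg_left
        (one_add_rpow_mul_one_add_rpow_le hY hZ hθ₀.le (by linarith)) hm.le
      simp only [thetaGauge, abs_one, one_rpow, mul_one]
      nlinarith
    have hpow := rpow_le_rpow (by positivity) hle hν.le
    rw [mul_rpow hm.le (by positivity), mul_rpow (by positivity) (by positivity),
      ← rpow_mul (by positivity), ← rpow_mul (by positivity)] at hpow
    rw [← ENNReal.ofReal_mul (by positivity), ← ENNReal.ofReal_mul (by positivity), ← mul_inv,
      ← mul_inv]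
    exact ENNReal.ofReal_le_ofReal (inv_anti₀ (by positivity) hpow)
  calc thetaMarginal q1 q2 q3 c1 c2 c3 ν 1
      ≤ ∫⁻ y, ∫⁻ z, ENNReal.ofReal ((m ^ ν)⁻¹) *
          (ENNReal.ofReal (((1 + |y| ^ (q2 / ν)) ^ (θ * ν))⁻¹) *
            ENNReal.ofReal (((1 + |z| ^ (q3 / ν)) ^ ((1 - θ) * ν))⁻¹)) :=
        lintegral_mono fun y => lintegral_mono fun z => hbound y z
    _ = ENNReal.ofReal ((m ^ ν)⁻¹) * ((∫⁻ y, ENNReal.ofReal (((1 + |y| ^ (q2 / ν)) ^ (θ * ν))⁻¹)) *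
          ∫⁻ z, ENNReal.ofReal (((1 + |z| ^ (q3 / ν)) ^ ((1 - θ) * ν))⁻¹)) := by
        simp_rw [lintegral_const_mul' _ _ ENNReal.ofReal_ne_top]
        rw [lintegral_mul_const _ (by fun_prop)]
    _ < ⊤ := ENNReal.mul_lt_top ENNReal.ofReal_lt_top
        (ENNReal.mul_lt_top hy.lintegral_lt_top hz.lintegral_lt_top)

lemma theta_eq_lintegral_mul (hq2 : q2 ≠ 0) (hq3 : q3 ≠ 0) (hν : ν ≠ 0) (hc1 : 0 ≤ c1)
    (hc2 : 0 ≤ c2) (hc3 : 0 ≤ c3) (t : ℝ) :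
    theta q1 q2 q3 c1 c2 c3 ν t =
      (∫⁻ u : ℝ, ENNReal.ofReal
        (|u| ^ (q1 / q2 + q1 / q3 - q1) * |t - u| ^ (q1 / q2 + q1 / q3 - q1))) *
      (thetaMarginal q1 q2 q3 c1 c2 c3 ν 1 * thetaMarginal q1 q2 q3 c1 c2 c3 ν 1) := by
  have hae : ∀ᵐ u : ℝ, thetaMarginal q1 q2 q3 c1 c2 c3 ν u *
      thetaMarginal q1 q2 q3 c1 c2 c3 ν (t - u) =
      ENNReal.ofReal (|u| ^ (q1 / q2 + q1 / q3 - q1) * |t - u| ^ (q1 / q2 + q1 / q3 - q1)) *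
        (thetaMarginal q1 q2 q3 c1 c2 c3 ν 1 * thetaMarginal q1 q2 q3 c1 c2 c3 ν 1) := by
    filter_upwards [compl_mem_ae_iff.2 (measure_singleton (0 : ℝ)),
      compl_mem_ae_iff.2 (measure_singleton t)] with u hu0 hut
    rw [thetaMarginal_eq_rpow_mul hq2 hq3 hν hc1 hc2 hc3 hu0,
      thetaMarginal_eq_rpow_mul hq2 hq3 hν hc1 hc2 hc3 (sub_ne_zero.2 (Ne.symm hut)),
      ENNReal.ofReal_mul (rpow_nonneg (abs_nonneg _) _)]
    ring
  rw [theta_eq_lintegral_thetaMarginal_mul hc1 hc2 hc3, lintegral_congr_ae hae,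
    lintegral_mul_const _ (by fun_prop)]

end

theorem stmt_18 (q1 q2 q3 c1 c2 c3 ν : ℝ)
    (hq1 : 0 < q1) (hq2 : 0 < q2) (hq3 : 0 < q3)
    (hc1 : 0 < c1) (hc2 : 0 < c2) (hc3 : 0 < c3) (hν : 0 < ν)
    (hlow : 1 / (2 * q1) + 1 / q2 + 1 / q3 < 1)
    (hup : 1 < 1 / q1 + 1 / q2 + 1 / q3) :
    ∀ t : ℝ, t ≠ 0 →
      theta q1 q2 q3 c1 c2 c3 ν t < ⊤ ∧
      theta q1 q2 q3 c1 c2 c3 ν t = theta q1 q2 q3 c1 c2 c3 ν 1 *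
        ENNReal.ofReal (|t| ^ (1 + 2 * q1 * (1 / q2 + 1 / q3 - 1))) := by
  intro t ht
  have hβ₁ : -1 < q1 / q2 + q1 / q3 - q1 := by
    have : q1 / q2 + q1 / q3 - q1 + 1 = q1 * (1 / q1 + 1 / q2 + 1 / q3 - 1) := by
      field_simp; ring
    linarith [mul_pos hq1 (sub_pos.2 hup)]
  have hβ₂ : 2 * (q1 / q2 + q1 / q3 - q1) < -1 := by
    have : 2 * (q1 / q2 + q1 / q3 - q1) + 1 = 2 * q1 * (1 / (2 * q1) + 1 / q2 + 1 / q3 - 1) := by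
      field_simp; ring
    linarith [mul_neg_of_pos_of_neg (by positivity : 0 < 2 * q1) (sub_neg.2 hlow)]
  have h23 : 1 / q2 + 1 / q3 < 1 := by linarith [one_div_pos.2 (by positivity : 0 < 2 * q1)]
  have hG := thetaMarginal_one_lt_top (q1 := q1) hq2 hq3 hc1 hc2 hc3 hν h23
  rw [theta_eq_lintegral_mul hq2.ne' hq3.ne' hν.ne' hc1.le hc2.le hc3.le t,
    theta_eq_lintegral_mul hq2.ne' hq3.ne' hν.ne' hc1.le hc2.le hc3.le 1,
    lintegral_abs_rpow_mul_abs_sub_rpow ht,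
    show 1 + 2 * (q1 / q2 + q1 / q3 - q1) = 1 + 2 * q1 * (1 / q2 + 1 / q3 - 1) by ring]
  refine ⟨?_, by ring⟩
  exact ENNReal.mul_lt_top (ENNReal.mul_lt_top ENNReal.ofReal_lt_top
    (lintegral_abs_rpow_mul_abs_one_sub_rpow_lt_top hβ₁ hβ₂)) (ENNReal.mul_lt_top hG hG)
end
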